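/- arXiv:1005.5640 — 4 statements merged into one kernel-verified Lean document; each statement's English description precedes it below -/
import Mathlib

section
/- Let M₁,...,Mₜ be matroids with E(Mᵢ) ∩ E(Mⱼ) = {p} for all i ≠ j, p not a loop in any Mᵢ, and M = P(M₁,...,Mₜ;p) their iterated parallel connection at p. A set B not containing p is a basis of M if and only if there is exactly one index i such that B ∩ E(Mᵢ) is a basis of Mᵢ not containing p, and for every j ≠ i, (B ∩ E(Mⱼ)) ∪ {p} is a basis of Mⱼ. -/
open Set

namespace Matroid

variable {α : Type*}

/-- A circuit of a matroid is a minimal dependent set. -/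
def IsCircuit' (M : Matroid α) (C : Set α) : Prop := Minimal M.Dep C

/-- A cocircuit of `M` is a circuit of the dual matroid. -/
def IsCocircuit' (M : Matroid α) (C : Set α) : Prop := M✶.IsCircuit' C

/-- An element is a loop if the singleton is a circuit. -/
def IsLoopElem (M : Matroid α) (e : α) : Prop := M.IsCircuit' {e}

/-- `C` is the fundamental circuit of `e` with respect to the basis `B`:
the unique circuit containing `e` and contained in `B ∪ {e}`. -/
def IsFundCircuit (M : Matroid α) (B : Set α) (e : α) (C : Set α) : Prop :=
  M.IsCircuit' C ∧ e ∈ C ∧ C ⊆ insert e B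

/-- `D` is the fundamental cocircuit of `b` with respect to the basis `B`:
the unique cocircuit containing `b` and contained in `(E(M) \ B) ∪ {b}`. -/
def IsFundCocircuit (M : Matroid α) (B : Set α) (b : α) (D : Set α) : Prop :=
  M.IsCocircuit' D ∧ b ∈ D ∧ D ⊆ insert b (M.E \ B)

/-- Deletion of a single element. -/
def deleteElem (M : Matroid α) (e : α) : Matroid α := M ↾ (M.E \ {e})

/-- Contraction of a single element, defined as the dual of the deletion in the dual. -/
def contractElem (M : Matroid α) (e : α) : Matroid α := (M✶ ↾ (M.E \ {e}))✶

/-- `P` is the parallel connection of `M` and `N` with respect to the basepoint `p`: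
its ground set is `M.E ∪ N.E`, and its circuits are the circuits of `M`, the circuits of
`N`, and sets `(C₁ ∪ C₂) \ {p}` for circuits `C₁` of `M` and `C₂` of `N` both containing `p`. -/
def IsParallelConn (M N : Matroid α) (p : α) (P : Matroid α) : Prop :=
  P.E = M.E ∪ N.E ∧
  ∀ C, P.IsCircuit' C ↔ (M.IsCircuit' C ∨ N.IsCircuit' C ∨
    ∃ C₁ C₂, M.IsCircuit' C₁ ∧ N.IsCircuit' C₂ ∧ p ∈ C₁ ∧ p ∈ C₂ ∧ C = (C₁ ∪ C₂) \ {p})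

/-- `M` is (a copy of) the uniform matroid `U(r,n)`: the ground set has `n` elements and the
independent sets are exactly the subsets of the ground set of cardinality at most `r`. -/
def IsUniform (M : Matroid α) (r n : ℕ) : Prop :=
  M.E.Finite ∧ M.E.ncard = n ∧ ∀ I ⊆ M.E, (M.Indep I ↔ I.ncard ≤ r)

end Matroid

/-!
A set `I` is independent in a parallel connection `P(M, N; p)` exactly when its traces on `M`
and `N` are independent and `p` can be added to at least one of them: otherwise circuits of `M`
and `N` through `p` glue to a circuit of `P` inside `I`. Hence, when `E(M) ∩ E(N) = {p}`, a basis
of `P` is a basis of one side together with a set that completes to a basis of the other side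
after adding `p`. Iterating, a basis `B` of `P(M₁, …, Mₜ; p)` traces a basis on some `Mᵢ` and
completes with `p` to a basis on all the others; if `p ∉ B` the index `i` is unique, since
`B ∩ E(Mⱼ)` and `(B ∩ E(Mⱼ)) ∪ {p}` cannot both be bases of `Mⱼ`.
-/

namespace Nat

lemma exists_le_succ_and_forall_ne_iff {A A' : ℕ → Prop} {k : ℕ} :
    (∃ i ≤ k + 1, A i ∧ ∀ j ≤ k + 1, j ≠ i → A' j) ↔
      ((∃ i ≤ k, A i ∧ ∀ j ≤ k, j ≠ i → A' j) ∧ A' (k + 1)) ∨ ((∀ j ≤ k, A' j) ∧ A (k + 1)) := by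
  constructor
  · rintro ⟨i, hi, hA, hA'⟩
    obtain hik | rfl := le_succ_iff.1 hi
    · exact .inl ⟨⟨i, hik, hA, fun j hj ↦ hA' j (by omega)⟩, hA' _ le_rfl (by omega)⟩
    · exact .inr ⟨fun j hj ↦ hA' j (by omega) (by omega), hA⟩
  · rintro (⟨⟨i, hi, hA, hA'⟩, hA'k⟩ | ⟨hA', hA⟩)
    · refine ⟨i, by omega, hA, fun j hj hji ↦ ?_⟩
      obtain hjk | rfl := le_succ_iff.1 hj
      exacts [hA' j hjk hji, hA'k]
    · exact ⟨k + 1, le_rfl, hA, fun j hj hjk ↦ hA' j (by omega)⟩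

lemma exists_le_and_forall_ne_iff_forall {A : ℕ → Prop} {k : ℕ} :
    (∃ i ≤ k, A i ∧ ∀ j ≤ k, j ≠ i → A j) ↔ ∀ j ≤ k, A j := by
  refine ⟨fun ⟨i, _, hAi, hA⟩ j hj ↦ ?_,
    fun hA ↦ ⟨0, k.zero_le, hA 0 k.zero_le, fun j hj _ ↦ hA j hj⟩⟩
  obtain rfl | hji := eq_or_ne j i
  exacts [hAi, hA j hj hji]

end Nat

namespace Matroid

variable {α : Type*} {M N P : Matroid α} {p e : α} {B C I : Set α}

lemma Indep.exists_isCircuit_of_not_indep_insert (hI : M.Indep I) (he : e ∈ M.E)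
    (hnot : ¬ M.Indep (insert e I)) : ∃ C ⊆ insert e I, M.IsCircuit C ∧ e ∈ C := by
  obtain ⟨hcl, heI⟩ :=
    hI.insert_dep_iff.1 ((not_indep_iff (insert_subset he hI.subset_ground)).1 hnot)
  exact exists_isCircuit_of_mem_closure hcl heI

namespace IsParallelConn

lemma symm (h : IsParallelConn M N p P) : IsParallelConn N M p P := by
  refine ⟨h.1.trans (union_comm _ _), fun C ↦ (h.2 C).trans ?_⟩
  rw [or_left_comm, exists_comm]
  simp only [union_comm, and_left_comm]

lemma isCircuit_iff (h : IsParallelConn M N p P) : P.IsCircuit C ↔ M.IsCircuit C ∨ N.IsCircuit C ∨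
    ∃ C₁ C₂, M.IsCircuit C₁ ∧ N.IsCircuit C₂ ∧ p ∈ C₁ ∧ p ∈ C₂ ∧ C = (C₁ ∪ C₂) \ {p} :=
  h.2 C

lemma isCircuit_of_left (h : IsParallelConn M N p P) (hC : M.IsCircuit C) : P.IsCircuit C :=
  h.isCircuit_iff.2 (Or.inl hC)

lemma indep_inter_left (h : IsParallelConn M N p P) (hI : P.Indep I) : M.Indep (I ∩ M.E) := by
  rw [indep_iff_forall_subset_not_isCircuit inter_subset_right]
  exact fun C hCI hC ↦
    (h.isCircuit_of_left hC).dep.not_indep (hI.subset (hCI.trans inter_subset_left))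

lemma indep_iff (h : IsParallelConn M N p P) (hpM : p ∈ M.E) (hpN : p ∈ N.E) (hI : I ⊆ P.E) :
    P.Indep I ↔ M.Indep (I ∩ M.E) ∧ N.Indep (I ∩ N.E) ∧
      (M.Indep (insert p (I ∩ M.E)) ∨ N.Indep (insert p (I ∩ N.E))) := by
  have subset_insert_of_sdiff {Q : Matroid α} {D : Set α} (hD : D ⊆ Q.E) (hDI : D \ {p} ⊆ I) :
      D ⊆ insert p (I ∩ Q.E) := fun x hx ↦
    (eq_or_ne x p).imp id fun hxp ↦ ⟨hDI ⟨hx, hxp⟩, hD hx⟩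
  refine ⟨fun hPI ↦ ⟨h.indep_inter_left hPI, h.symm.indep_inter_left hPI, ?_⟩, ?_⟩
  · by_contra! hdep
    obtain ⟨C₁, hC₁I, hC₁, hpC₁⟩ :=
      (h.indep_inter_left hPI).exists_isCircuit_of_not_indep_insert hpM hdep.1
    obtain ⟨C₂, hC₂I, hC₂, hpC₂⟩ :=
      (h.symm.indep_inter_left hPI).exists_isCircuit_of_not_indep_insert hpN hdep.2
    have hP : P.IsCircuit ((C₁ ∪ C₂) \ {p}) :=
      h.isCircuit_iff.2 (Or.inr (Or.inr ⟨C₁, C₂, hC₁, hC₂, hpC₁, hpC₂, rfl⟩))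
    refine hP.dep.not_indep (hPI.subset ?_)
    rintro x ⟨hx₁ | hx₂, hxp⟩
    · exact ((hC₁I hx₁).resolve_left hxp).1
    · exact ((hC₂I hx₂).resolve_left hxp).1
  · rintro ⟨hM, hN, hMN⟩
    rw [indep_iff_forall_subset_not_isCircuit hI]
    intro C hCI hC
    obtain hC | hC | ⟨C₁, C₂, hC₁, hC₂, -, -, rfl⟩ := h.isCircuit_iff.1 hC
    · exact hC.dep.not_indep (hM.subset (subset_inter hCI hC.subset_ground))
    · exact hC.dep.not_indep (hN.subset (subset_inter hCI hC.subset_ground))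
    · obtain hMp | hNp := hMN
      · refine hC₁.dep.not_indep (hMp.subset (subset_insert_of_sdiff hC₁.subset_ground ?_))
        exact (sdiff_subset_sdiff_left subset_union_left).trans hCI
      · refine hC₂.dep.not_indep (hNp.subset (subset_insert_of_sdiff hC₂.subset_ground ?_))
        exact (sdiff_subset_sdiff_left subset_union_right).trans hCI

lemma indep_of_indep_left_of_indep_insert_right (h : IsParallelConn M N p P) (hpM : p ∈ M.E)
    (hpN : p ∈ N.E) (hI : I ⊆ P.E) (hM : M.Indep (I ∩ M.E)) (hN : N.Indep (insert p (I ∩ N.E))) :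
    P.Indep I :=
  (h.indep_iff hpM hpN hI).2 ⟨hM, hN.subset (subset_insert _ _), Or.inr hN⟩

section Base

variable (h : IsParallelConn M N p P) (hMN : M.E ∩ N.E = {p})
include h hMN

lemma isBase_inter_of_isBase_of_indep_insert_right (hPB : P.IsBase B)
    (hN : N.Indep (insert p (B ∩ N.E))) : M.IsBase (B ∩ M.E) ∧ N.IsBase (insert p (B ∩ N.E)) := by
  have hpMN : p ∈ M.E ∩ N.E := hMN ▸ rfl
  have mem_of_indep (e : α) (he : e ∈ P.E) (hM : M.Indep (insert e B ∩ M.E))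
      (hN : N.Indep (insert p (insert e B ∩ N.E))) : e ∈ B :=
    hPB.mem_of_insert_indep <| h.indep_of_indep_left_of_indep_insert_right
      hpMN.1 hpMN.2 (insert_subset he hPB.subset_ground) hM hN
  constructor
  · refine (h.indep_inter_left hPB.indep).isBase_of_forall_insert fun e ⟨heM, heB⟩ hins ↦
      heB ⟨mem_of_indep e (h.1 ▸ Or.inl heM) (by rwa [insert_inter_of_mem heM]) ?_, heM⟩
    by_cases heN : e ∈ N.E
    · obtain rfl : e = p := hMN.subset ⟨heM, heN⟩
      rwa [insert_inter_of_mem heN, insert_idem]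
    · rwa [insert_inter_of_notMem heN]
  · refine hN.isBase_of_forall_insert fun e ⟨heN, he⟩ hins ↦
      he (mem_insert_of_mem _ ⟨mem_of_indep e (h.1 ▸ Or.inr heN) ?_ ?_, heN⟩)
    · have heM : e ∉ M.E := fun heM ↦ he (.inl (hMN.subset ⟨heM, heN⟩))
      rw [insert_inter_of_notMem heM]
      exact h.indep_inter_left hPB.indep
    · rwa [insert_inter_of_mem heN, insert_comm]

lemma isBase_of_isBase_left_of_isBase_insert_right (hB : B ⊆ P.E) (hM : M.IsBase (B ∩ M.E))
    (hN : N.IsBase (insert p (B ∩ N.E))) : P.IsBase B := by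
  have hpMN : p ∈ M.E ∩ N.E := hMN ▸ rfl
  refine (h.indep_of_indep_left_of_indep_insert_right hpMN.1 hpMN.2 hB hM.indep hN.indep
    ).isBase_of_forall_insert fun e ⟨heP, heB⟩ hins ↦ ?_
  by_cases heM : e ∈ M.E
  · have hMe := h.indep_inter_left hins
    rw [insert_inter_of_mem heM] at hMe
    exact heB (hM.mem_of_insert_indep hMe).1
  have heN : e ∈ N.E := (h.1 ▸ heP).resolve_left heM
  have hNe : ¬ N.Indep (insert e (insert p (B ∩ N.E))) := fun hNe ↦ by
    obtain rfl | heB' := hN.mem_of_insert_indep hNe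
    exacts [heM hpMN.1, heB heB'.1]
  obtain ⟨-, hNe', hMp | hNp⟩ := (h.indep_iff hpMN.1 hpMN.2 hins.subset_ground).1 hins
  · by_cases hpB : p ∈ B
    · rw [insert_eq_of_mem (mem_inter hpB hpMN.2), ← insert_inter_of_mem heN] at hNe
      exact hNe hNe'
    · rw [insert_inter_of_notMem heM] at hMp
      exact hpB (hM.mem_of_insert_indep hMp).1
  · rw [insert_inter_of_mem heN, insert_comm] at hNp
    exact hNe hNp

theorem isBase_iff (hB : B ⊆ P.E) :
    P.IsBase B ↔ (M.IsBase (B ∩ M.E) ∧ N.IsBase (insert p (B ∩ N.E))) ∨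
      (M.IsBase (insert p (B ∩ M.E)) ∧ N.IsBase (B ∩ N.E)) := by
  have hNM : N.E ∩ M.E = {p} := by rwa [inter_comm]
  have hpMN : p ∈ M.E ∩ N.E := hMN ▸ rfl
  refine ⟨fun hPB ↦ ?_, ?_⟩
  · obtain ⟨-, -, hMp | hNp⟩ := (h.indep_iff hpMN.1 hpMN.2 hB).1 hPB.indep
    · exact .inr (h.symm.isBase_inter_of_isBase_of_indep_insert_right hNM hPB hMp).symm
    · exact .inl (h.isBase_inter_of_isBase_of_indep_insert_right hMN hPB hNp)
  · rintro (⟨hM, hN⟩ | ⟨hM, hN⟩)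
    · exact h.isBase_of_isBase_left_of_isBase_insert_right hMN hB hM hN
    · exact h.symm.isBase_of_isBase_left_of_isBase_insert_right hNM hB hN hM

end Base

end IsParallelConn

section Iterated

variable {M P : ℕ → Matroid α} {k : ℕ}

lemma iterParallelConn_ground (hP0 : P 0 = M 0)
    (hPsucc : ∀ i < k, IsParallelConn (P i) (M (i + 1)) p (P (i + 1))) :
    (P k).E = ⋃ i ∈ Finset.range (k + 1), (M i).E := by
  induction k with
  | zero => simp [hP0]
  | succ k ih =>
    rw [(hPsucc k k.lt_succ_self).1, ih fun i hi ↦ hPsucc i (by omega),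
      Finset.range_add_one (n := k + 1), Finset.set_biUnion_insert, union_comm]

lemma iterParallelConn_ground_inter (hP0 : P 0 = M 0)
    (hPsucc : ∀ i < k, IsParallelConn (P i) (M (i + 1)) p (P (i + 1)))
    (hground : ∀ i ≤ k + 1, ∀ j ≤ k + 1, i ≠ j → (M i).E ∩ (M j).E = {p}) :
    (P k).E ∩ (M (k + 1)).E = {p} := by
  rw [iterParallelConn_ground hP0 hPsucc, iUnion₂_inter]
  refine subset_antisymm (iUnion₂_subset fun i hi ↦ ?_) ?_
  · rw [Finset.mem_range] at hi
    exact (hground i (by omega) _ le_rfl (by omega)).subset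
  · exact singleton_subset_iff.2 <| mem_iUnion₂.2
      ⟨0, Finset.mem_range.2 k.succ_pos, (hground 0 (by omega) _ le_rfl (by omega)).ge rfl⟩

theorem iterParallelConn_isBase_iff (hP0 : P 0 = M 0)
    (hPsucc : ∀ i < k, IsParallelConn (P i) (M (i + 1)) p (P (i + 1)))
    (hground : ∀ i ≤ k, ∀ j ≤ k, i ≠ j → (M i).E ∩ (M j).E = {p})
    (hp : ∀ i ≤ k, p ∈ (M i).E) (hB : B ⊆ (P k).E) :
    (P k).IsBase B ↔ ∃ i ≤ k, (M i).IsBase (B ∩ (M i).E) ∧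
      ∀ j ≤ k, j ≠ i → (M j).IsBase (insert p (B ∩ (M j).E)) := by
  induction k generalizing B with
  | zero =>
    rw [hP0] at hB ⊢
    simp [inter_eq_self_of_subset_left hB]
  | succ k ih =>
    have hsub : ∀ i ≤ k, (M i).E ⊆ (P k).E := fun i hi ↦ by
      rw [iterParallelConn_ground hP0 fun i hi ↦ hPsucc i (by omega)]
      exact subset_iUnion₂_of_subset i (Finset.mem_range.2 (by omega)) subset_rfl
    have hpk : p ∈ (P k).E := hsub 0 (by omega) (hp 0 (by omega))
    have ih' (B' : Set α) := @ih B' (fun i hi ↦ hPsucc i (by omega))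
      (fun i hi j hj ↦ hground i (by omega) j (by omega)) (fun i hi ↦ hp i (by omega))
    rw [(hPsucc k k.lt_succ_self).isBase_iff (iterParallelConn_ground_inter hP0
        (fun i hi ↦ hPsucc i (by omega)) hground) hB,
      ih' _ inter_subset_right, ih' _ (insert_subset hpk inter_subset_right),
      Nat.exists_le_succ_and_forall_ne_iff]
    have hres (i) (hi : i ≤ k) : B ∩ (P k).E ∩ (M i).E = B ∩ (M i).E := by
      rw [inter_assoc, inter_eq_right.2 (hsub i hi)]
    have hres' (i) (hi : i ≤ k) : insert p (B ∩ (P k).E) ∩ (M i).E = insert p (B ∩ (M i).E) := by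
      rw [insert_inter_of_mem (hp i (by omega)), hres i hi]
    simp +contextual only [hres, hres', insert_idem]
    refine or_congr (and_congr_left' ?_) (and_congr_left' ?_)
    · exact exists_congr fun i ↦ and_congr_right fun hi ↦ by rw [hres i hi]
    · rw [← Nat.exists_le_and_forall_ne_iff_forall]
      exact exists_congr fun i ↦ and_congr_right fun hi ↦ by rw [hres' i hi]

end Iterated

end Matroid

open Matroid in
theorem base_iterated_parallelConn_not_mem_basepoint_general {α : Type*} (t : ℕ) (ht : 1 ≤ t)
    (M : ℕ → Matroid α) (P : ℕ → Matroid α) (p : α)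
    (hground : ∀ i < t, ∀ j < t, i ≠ j → (M i).E ∩ (M j).E = {p})
    (hp : ∀ i < t, p ∈ (M i).E ∧ ¬ (M i).IsLoopElem p)
    (hP0 : P 0 = M 0)
    (hPsucc : ∀ i, i + 1 < t → IsParallelConn (P i) (M (i + 1)) p (P (i + 1)))
    (B : Set α) (hBsub : B ⊆ ⋃ i ∈ Finset.range t, (M i).E) (hpB : p ∉ B) :
    (P (t - 1)).IsBase B ↔
      ∃! i, i < t ∧ (M i).IsBase (B ∩ (M i).E) ∧ p ∉ B ∩ (M i).E ∧
        ∀ j < t, j ≠ i → (M j).IsBase (insert p (B ∩ (M j).E)) := by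
  obtain ⟨k, rfl⟩ : ∃ k, t = k + 1 := ⟨t - 1, by omega⟩
  have hPsucc' : ∀ i < k, IsParallelConn (P i) (M (i + 1)) p (P (i + 1)) :=
    fun i hi ↦ hPsucc i (by omega)
  have hB : B ⊆ (P k).E := iterParallelConn_ground hP0 hPsucc' ▸ hBsub
  rw [Nat.add_sub_cancel, iterParallelConn_isBase_iff hP0 hPsucc'
    (fun i hi j hj ↦ hground i (by omega) j (by omega)) (fun i hi ↦ (hp i (by omega)).1) hB]
  constructor
  · rintro ⟨i, hi, hA, hA'⟩
    refine ⟨i, ⟨by omega, hA, fun hpB' ↦ hpB hpB'.1, fun j hj ↦ hA' j (by omega)⟩, ?_⟩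
    rintro i' ⟨hi', hAi', -, -⟩
    by_contra hne
    exact hpB (hAi'.mem_of_insert_indep (hA' i' (by omega) hne).indep).1
  · rintro ⟨i, ⟨hi, hA, -, hA'⟩, -⟩
    exact ⟨i, by omega, hA, fun j hj ↦ hA' j (by omega)⟩

open Matroid in
/-- bases of an iterated parallel connection not containing the basepoint. -/
theorem base_iterated_parallelConn_not_mem_basepoint {α : Type*} (t : ℕ) (ht : 1 ≤ t)
    (M : ℕ → Matroid α) (P : ℕ → Matroid α) (p : α)
    (hfin : ∀ i < t, (M i).Finite)
    (hground : ∀ i < t, ∀ j < t, i ≠ j → (M i).E ∩ (M j).E = {p})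
    (hp : ∀ i < t, p ∈ (M i).E ∧ ¬ (M i).IsLoopElem p)
    (hP0 : P 0 = M 0)
    (hPsucc : ∀ i, i + 1 < t → IsParallelConn (P i) (M (i + 1)) p (P (i + 1)))
    (B : Set α) (hBsub : B ⊆ ⋃ i ∈ Finset.range t, (M i).E) (hpB : p ∉ B) :
    (P (t - 1)).IsBase B ↔
      ∃! i, i < t ∧ (M i).IsBase (B ∩ (M i).E) ∧ p ∉ B ∩ (M i).E ∧
        ∀ j < t, j ≠ i → (M j).IsBase (insert p (B ∩ (M j).E)) :=
  base_iterated_parallelConn_not_mem_basepoint_general t ht M P p hground hp hP0 hPsucc B hBsub hpB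
end

section
/- Let M₁, M₂, M₃ be matroids with E(Mᵢ) ∩ E(Mⱼ) = {p} for all i ≠ j, and suppose p is not a loop in any Mᵢ. Then parallel connection at p is associative: P(M₁, P(M₂,M₃;p); p) = P(P(M₁,M₂;p), M₃; p). -/
/-!
A circuit of `P(N, M; p)` through `p` is a circuit of `N` or of `M`, since the glued circuits
`(C₁ ∪ C₂) \ {p}` avoid `p`. Hence gluing a circuit of `P(M₁, M₂; p)` to one of `M₃` is the same
as gluing a circuit of `M₁` or of `M₂` to it, and both bracketings of `P(M₁, M₂, M₃; p)` have as
circuits the circuits of the three matroids together with the pairwise glued circuits.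
A matroid is determined by its ground set and its circuits.
-/

open Set

namespace Matroid

variable {α : Type*} {M N N₁ N₂ P : Matroid α} {p : α} {C : Set α}

def IsGluedCircuit (M N : Matroid α) (p : α) (C : Set α) : Prop :=
  ∃ C₁ C₂, M.IsCircuit' C₁ ∧ N.IsCircuit' C₂ ∧ p ∈ C₁ ∧ p ∈ C₂ ∧ C = (C₁ ∪ C₂) \ {p}

lemma ext_isCircuit' (hE : M.E = N.E)
    (h : ∀ C, M.IsCircuit' C ↔ N.IsCircuit' C) : M = N :=
  ext_isCircuit hE fun C _ ↦ h C

lemma isGluedCircuit_comm : IsGluedCircuit M N p C ↔ IsGluedCircuit N M p C := by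
  constructor <;>
  · rintro ⟨C₁, C₂, h₁, h₂, hp₁, hp₂, rfl⟩
    exact ⟨C₂, C₁, h₂, h₁, hp₂, hp₁, by rw [union_comm]⟩

lemma IsGluedCircuit.notMem (h : IsGluedCircuit M N p C) : p ∉ C := by
  obtain ⟨_, _, _, _, _, _, rfl⟩ := h
  simp

lemma IsParallelConn.ground_eq (h : IsParallelConn M N p P) : P.E = M.E ∪ N.E := h.1

lemma IsParallelConn.isCircuit'_iff (h : IsParallelConn M N p P) :
    P.IsCircuit' C ↔ M.IsCircuit' C ∨ N.IsCircuit' C ∨ IsGluedCircuit M N p C := h.2 C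

lemma IsParallelConn.symm_s9 (h : IsParallelConn M N p P) : IsParallelConn N M p P :=
  ⟨h.ground_eq.trans (union_comm _ _), fun C ↦ by
    rw [h.isCircuit'_iff, isGluedCircuit_comm, or_left_comm]; rfl⟩

lemma IsParallelConn.isCircuit'_of_mem (h : IsParallelConn N₁ N₂ p P) (hC : P.IsCircuit' C)
    (hpC : p ∈ C) : N₁.IsCircuit' C ∨ N₂.IsCircuit' C := by
  rcases h.isCircuit'_iff.1 hC with h₁ | h₂ | hglued
  · exact .inl h₁
  · exact .inr h₂
  · exact absurd hpC hglued.notMem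

lemma IsParallelConn.isGluedCircuit_left_iff (h : IsParallelConn N₁ N₂ p P) :
    IsGluedCircuit P M p C ↔ IsGluedCircuit N₁ M p C ∨ IsGluedCircuit N₂ M p C := by
  constructor
  · rintro ⟨C₁, C₂, hC₁, hC₂, hp₁, hp₂, rfl⟩
    rcases h.isCircuit'_of_mem hC₁ hp₁ with hN₁ | hN₂
    · exact .inl ⟨C₁, C₂, hN₁, hC₂, hp₁, hp₂, rfl⟩
    · exact .inr ⟨C₁, C₂, hN₂, hC₂, hp₁, hp₂, rfl⟩
  · rintro (⟨C₁, C₂, hC₁, hC₂, hp₁, hp₂, rfl⟩ | ⟨C₁, C₂, hC₁, hC₂, hp₁, hp₂, rfl⟩)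
    · exact ⟨C₁, C₂, h.isCircuit'_iff.2 (.inl hC₁), hC₂, hp₁, hp₂, rfl⟩
    · exact ⟨C₁, C₂, h.isCircuit'_iff.2 (.inr (.inl hC₁)), hC₂, hp₁, hp₂, rfl⟩

lemma IsParallelConn.isCircuit'_iff_of_isParallelConn_left {M₁ M₂ M₃ R₁ R₂ : Matroid α}
    (hR₁ : IsParallelConn M₁ M₂ p R₁) (hR₂ : IsParallelConn R₁ M₃ p R₂) :
    R₂.IsCircuit' C ↔ M₁.IsCircuit' C ∨ M₂.IsCircuit' C ∨ M₃.IsCircuit' C ∨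
      IsGluedCircuit M₁ M₂ p C ∨ IsGluedCircuit M₁ M₃ p C ∨ IsGluedCircuit M₂ M₃ p C := by
  rw [hR₂.isCircuit'_iff, hR₁.isCircuit'_iff, hR₁.isGluedCircuit_left_iff]
  tauto

end Matroid

open Matroid in
theorem parallelConn_assoc_general {α : Type*} (M₁ M₂ M₃ Q₁ Q₂ R₁ R₂ : Matroid α) (p : α)
    (hQ₁ : Matroid.IsParallelConn M₂ M₃ p Q₁) (hQ₂ : Matroid.IsParallelConn M₁ Q₁ p Q₂)
    (hR₁ : Matroid.IsParallelConn M₁ M₂ p R₁) (hR₂ : Matroid.IsParallelConn R₁ M₃ p R₂) :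
    Q₂ = R₂ := by
  refine ext_isCircuit' ?_ fun C ↦ ?_
  · rw [hQ₂.ground_eq, hQ₁.ground_eq, hR₂.ground_eq, hR₁.ground_eq, union_assoc]
  · rw [hQ₁.isCircuit'_iff_of_isParallelConn_left hQ₂.symm_s9,
      hR₁.isCircuit'_iff_of_isParallelConn_left hR₂, isGluedCircuit_comm (M := M₃),
      isGluedCircuit_comm (M := M₂) (N := M₁)]
    tauto

open Matroid in
/-- parallel connection at a common basepoint is associative. -/
theorem parallelConn_assoc {α : Type*} (M₁ M₂ M₃ Q₁ Q₂ R₁ R₂ : Matroid α) (p : α)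
    [M₁.Finite] [M₂.Finite] [M₃.Finite]
    (h12 : M₁.E ∩ M₂.E = {p}) (h13 : M₁.E ∩ M₃.E = {p}) (h23 : M₂.E ∩ M₃.E = {p})
    (hp1 : ¬ M₁.IsLoopElem p) (hp2 : ¬ M₂.IsLoopElem p) (hp3 : ¬ M₃.IsLoopElem p)
    (hQ₁ : Matroid.IsParallelConn M₂ M₃ p Q₁) (hQ₂ : Matroid.IsParallelConn M₁ Q₁ p Q₂)
    (hR₁ : Matroid.IsParallelConn M₁ M₂ p R₁) (hR₂ : Matroid.IsParallelConn R₁ M₃ p R₂) :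
    Q₂ = R₂ :=
  parallelConn_assoc_general M₁ M₂ M₃ Q₁ Q₂ R₁ R₂ p hQ₁ hQ₂ hR₁ hR₂
end

section
/- Let M be a matroid whose ground set has a linear order, and let Δ_BC(M) be its broken circuit complex. Then Δ_BC(M) is a pure simplicial complex of the same dimension as the independence complex of M, and every facet of Δ_BC(M) is a basis of M. -/
open Set

open Matroid in
/-- A face of the broken circuit complex: a subset of the ground set containing no
broken circuit `C \ {min C}`. -/
def Matroid.InBCComplex {α : Type*} [LinearOrder α] (M : Matroid α) (F : Set α) : Prop :=
  F ⊆ M.E ∧ ∀ C, M.IsCircuit' C → ∀ m, IsLeast C m → ¬ (C \ {m} ⊆ F)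

/-!
A face `F` is independent, since a circuit inside `F` would contain its own broken circuit.
If a maximal face `F` were not spanning, let `e` be the least element of `E(M)` outside the
closure of `F`. Any broken circuit `C \ {m}` inside `F ∪ {e}` must contain `e`, so `m < e`; by
the choice of `e` this puts `m` in the closure of `F`, hence also `C \ {e}` and with it `e`.
So `F ∪ {e}` is a larger face, a contradiction. Thus maximal faces are bases, and all bases
have the same size.
-/

lemma Set.Nonempty.exists_isLeast {α : Type*} [LinearOrder α] [WellFoundedLT α] {s : Set α}
    (hs : s.Nonempty) : ∃ m, IsLeast s m :=
  ⟨wellFounded_lt.min s hs, wellFounded_lt.min_mem s hs, fun _ hx ↦ wellFounded_lt.min_le hx⟩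

namespace Matroid

variable {α : Type*} {M : Matroid α} {C F : Set α} {e : α}

lemma isCircuit'_iff_isCircuit : M.IsCircuit' C ↔ M.IsCircuit C := Iff.rfl

variable [LinearOrder α]

lemma InBCComplex.indep [WellFoundedLT α] (hF : M.InBCComplex F) : M.Indep F := by
  by_contra hdep
  obtain ⟨C, hCF, hC⟩ := ((not_indep_iff hF.1).1 hdep).exists_isCircuit_subset
  obtain ⟨m, hm⟩ := hC.nonempty.exists_isLeast
  exact hF.2 C (isCircuit'_iff_isCircuit.2 hC) m hm (sdiff_subset.trans hCF)

lemma InBCComplex.insert_of_isLeast (hF : M.InBCComplex F)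
    (he : IsLeast (M.E \ M.closure F) e) : M.InBCComplex (insert e F) := by
  refine ⟨insert_subset he.1.1 hF.1, fun C hC' m hm hCe ↦ ?_⟩
  have hC := isCircuit'_iff_isCircuit.1 hC'
  have he_mem : e ∈ C \ {m} := by
    by_contra h
    exact hF.2 C hC m hm fun x hx ↦ (hCe hx).resolve_left fun hxe ↦ h (hxe ▸ hx)
  have hme : m < e := lt_of_le_of_ne (hm.2 he_mem.1) (Ne.symm he_mem.2)
  have hm_cl : m ∈ M.closure F := by
    by_contra hmF
    exact hme.not_ge (he.2 ⟨hC.subset_ground hm.1, hmF⟩)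
  have hCe_cl : C \ {e} ⊆ M.closure F := by
    intro x hx
    by_cases hxm : x = m
    · exact hxm ▸ hm_cl
    · exact M.subset_closure F hF.1 ((hCe ⟨hx.1, hxm⟩).resolve_left hx.2)
  exact he.1.2 (M.closure_subset_closure_of_subset_closure hCe_cl
    (hC.mem_closure_sdiff_singleton_of_mem he_mem.1))

lemma spanning_of_maximal_inBCComplex [WellFoundedLT α] (hF : Maximal M.InBCComplex F) :
    M.Spanning F := by
  rw [spanning_iff_ground_subset_closure hF.1.1]
  by_contra hns
  obtain ⟨e, he⟩ := (sdiff_nonempty.2 hns).exists_isLeast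
  have heF : e ∈ F := hF.2 (hF.1.insert_of_isLeast he) (subset_insert e F) (mem_insert e F)
  exact he.1.2 (M.subset_closure F hF.1.1 heF)

lemma isBase_of_maximal_inBCComplex [WellFoundedLT α] (hF : Maximal M.InBCComplex F) :
    M.IsBase F :=
  hF.1.indep.isBase_of_spanning (spanning_of_maximal_inBCComplex hF)

end Matroid

open Matroid in
theorem bcComplex_facets_are_bases_general {α : Type*} [LinearOrder α] [WellFoundedLT α]
    (M : Matroid α) :
    (∀ F, Maximal (M.InBCComplex) F → M.IsBase F) ∧
    (∀ F G, Maximal (M.InBCComplex) F → Maximal (M.InBCComplex) G → F.ncard = G.ncard) :=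
  ⟨fun _ hF ↦ isBase_of_maximal_inBCComplex hF, fun _ _ hF hG ↦
    (isBase_of_maximal_inBCComplex hF).ncard_eq_ncard_of_isBase
      (isBase_of_maximal_inBCComplex hG)⟩

open Matroid in
/-- the broken circuit complex is pure of the same dimension as the
independence complex; its facets (maximal faces) are bases of `M`. -/
theorem bcComplex_facets_are_bases {α : Type*} [LinearOrder α] [WellFoundedLT α]
    (M : Matroid α) [M.Finite] :
    (∀ F, Maximal (M.InBCComplex) F → M.IsBase F) ∧
    (∀ F G, Maximal (M.InBCComplex) F → Maximal (M.InBCComplex) G → F.ncard = G.ncard) :=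
  bcComplex_facets_are_bases_general M
end

section
/- Let M be a matroid, B a basis, and {e,f} a cocircuit of M with e ∈ B and f ∉ B. If e_j ∈ B \ {e}, then the fundamental cocircuit of e_j with respect to the basis B' = (B \ {e}) ∪ {f} in the deletion M \ e satisfies: either it equals the fundamental cocircuit coc(B, e_j) of M, or its union with {e} is a cocircuit of M. -/
open Set

namespace Matroid

variable {α : Type*} {M : Matroid α} {e : α} {C D : Set α}

lemma IsCircuit.isCircuit_or_isCircuit_insert_of_contract (hC : (M ／ {e}).IsCircuit C) :
    M.IsCircuit C ∨ M.IsCircuit (insert e C) := by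
  obtain ⟨C', hC', hCC', hC'C⟩ := hC.exists_subset_isCircuit_of_contract
  rw [union_singleton] at hC'C
  by_cases heC' : e ∈ C'
  · exact .inr <| (hC'C.antisymm (insert_subset heC' hCC')).symm ▸ hC'
  · exact .inl <| ((subset_insert_iff_of_notMem heC').1 hC'C).antisymm hCC' ▸ hC'

lemma IsCocircuit.isCocircuit_or_isCocircuit_insert_of_delete (hD : (M ＼ {e}).IsCocircuit D) :
    M.IsCocircuit D ∨ M.IsCocircuit (insert e D) := by
  rw [isCocircuit_def, dual_delete] at hD
  exact hD.isCircuit_or_isCircuit_insert_of_contract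

lemma IsFundCocircuit.of_deleteElem {B B' : Set α} {b : α}
    (hD : (M.deleteElem e).IsFundCocircuit B' b D) (hDM : M.IsCocircuit' D)
    (hBB' : B \ {e} ⊆ B') : M.IsFundCocircuit B b D := by
  refine ⟨hDM, hD.2.1, hD.2.2.trans (insert_subset_insert ?_)⟩
  rintro x ⟨⟨hxE, hxe⟩, hxB'⟩
  exact ⟨hxE, fun hxB ↦ hxB' (hBB' ⟨hxB, hxe⟩)⟩

end Matroid

open Matroid in
theorem fundCocircuit_delete_cases_general {α : Type*} (M : Matroid α) (B : Set α) (e f : α)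
    (ej : α) (D : Set α)
    (hD : (M.deleteElem e).IsFundCocircuit (insert f (B \ {e})) ej D) :
    M.IsFundCocircuit B ej D ∨ M.IsCocircuit' (insert e D) :=
  (IsCocircuit.isCocircuit_or_isCocircuit_insert_of_delete hD.1).imp_left
    fun hDM ↦ hD.of_deleteElem hDM (subset_insert f _)

open Matroid in
/-- for a cocircuit `{e,f}` with `e ∈ B`, `f ∉ B`, and `e_j ∈ B \ {e}`,
the fundamental cocircuit of `e_j` w.r.t. `B' = (B \ {e}) ∪ {f}` in `M \ e` either is the
fundamental cocircuit `coc(B, e_j)` of `M`, or its union with `{e}` is a cocircuit of `M`. -/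
theorem fundCocircuit_delete_cases {α : Type*} (M : Matroid α) [M.Finite]
    (B : Set α) (hB : M.IsBase B) (e f : α) (hef : e ≠ f)
    (hcc : M.IsCocircuit' {e, f}) (heB : e ∈ B) (hfB : f ∉ B)
    (ej : α) (hej : ej ∈ B \ {e}) (D : Set α)
    (hD : (M.deleteElem e).IsFundCocircuit (insert f (B \ {e})) ej D) :
    M.IsFundCocircuit B ej D ∨ M.IsCocircuit' (insert e D) :=
  fundCocircuit_delete_cases_general M B e f ej D hD
end
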